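/- arXiv:math/0703226 — 3 statements merged into one kernel-verified Lean document; each statement's English description precedes it below -/
import Mathlib

section
/- Under conditions (LG) and (M), the map φ ↦ ρ(φ) = E_{μ̄_φ}[ξ(0)] = Z(φ)⁻¹ Σ_{k≥0} k φ^k / g(k)! is a diffeomorphism from [0,∞) onto itself. -/
open Set

/-- `g(k)! = g(1) ⋯ g(k)`, with `g(0)! = 1`. -/
noncomputable def gfact (g : ℕ → ℝ) : ℕ → ℝ
  | 0 => 1
  | n + 1 => gfact g n * g (n + 1)

/-- The partition function `Z(φ) = Σ_{k ≥ 0} φ^k / g(k)!`. -/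
noncomputable def Zfun (g : ℕ → ℝ) (φ : ℝ) : ℝ := ∑' k : ℕ, φ ^ k / gfact g k

/-- The mean density `ρ(φ) = Z(φ)⁻¹ Σ_{k ≥ 0} k φ^k / g(k)!` of `μ̄_φ`. -/
noncomputable def rhoFun (g : ℕ → ℝ) (φ : ℝ) : ℝ :=
  (∑' k : ℕ, (k : ℝ) * φ ^ k / gfact g k) / Zfun g φ

namespace DFDaux

open Filter Topology

/-- Series helper: `S w φ = ∑ w k φ^k`. -/
noncomputable def S (w : ℕ → ℝ) (φ : ℝ) : ℝ := ∑' k : ℕ, w k * φ ^ k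

/-- Coefficients whose series converges absolutely at every radius. -/
def Good (w : ℕ → ℝ) : Prop := ∀ R : ℝ, 0 < R → Summable fun k : ℕ ↦ |w k| * R ^ k

/-- Derived coefficients. -/
noncomputable def dw (w : ℕ → ℝ) (k : ℕ) : ℝ := ((k : ℝ) + 1) * w (k + 1)

variable {w : ℕ → ℝ}

lemma Good.mul_nat {w : ℕ → ℝ} (hw : Good w) : Good fun k ↦ (k : ℝ) * w k := by
  intro R hR
  refine Summable.of_nonneg_of_le (fun k ↦ by positivity) (fun k ↦ ?_) (hw (2 * R) (by positivity))
  have hk : (k : ℝ) ≤ 2 ^ k := by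
    exact_mod_cast (Nat.lt_two_pow_self (n := k)).le
  have h1 : |(k : ℝ) * w k| * R ^ k = (k : ℝ) * (|w k| * R ^ k) := by
    rw [abs_mul, Nat.abs_cast]; ring
  have h2 : |w k| * (2 * R) ^ k = 2 ^ k * (|w k| * R ^ k) := by
    rw [mul_pow]; ring
  rw [h1, h2]
  have hnn : 0 ≤ |w k| * R ^ k := by positivity
  exact mul_le_mul_of_nonneg_right hk hnn

lemma Good.summable {w : ℕ → ℝ} (hw : Good w) (φ : ℝ) :
    Summable fun k : ℕ ↦ w k * φ ^ k := by
  refine Summable.of_norm_bounded (hw (|φ| + 1) (by positivity)) (fun k ↦ ?_)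
  rw [norm_mul, norm_pow]
  have : ‖φ‖ ^ k ≤ (|φ| + 1) ^ k := pow_le_pow_left₀ (norm_nonneg _) (by rw [Real.norm_eq_abs]; linarith) k
  calc ‖w k‖ * ‖φ‖ ^ k ≤ ‖w k‖ * (|φ| + 1) ^ k := by
        exact mul_le_mul_of_nonneg_left this (norm_nonneg _)
    _ = |w k| * (|φ| + 1) ^ k := rfl

lemma Good.dw {w : ℕ → ℝ} (hw : Good w) : Good (dw w) := by
  intro R hR
  have h := (hw.mul_nat R hR).comp_injective (add_left_injective 1)
  -- h : Summable fun k ↦ |(↑(k+1)) * w (k+1)| * R ^ (k+1)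
  refine ((h.mul_left R⁻¹).congr (fun k ↦ ?_))
  simp only [Function.comp, DFDaux.dw]
  rw [abs_mul, abs_mul]
  have : |((k : ℝ) + 1)| = (k : ℝ) + 1 := abs_of_nonneg (by positivity)
  push_cast
  rw [this, pow_succ]
  have hR' : R ≠ 0 := ne_of_gt hR
  field_simp


lemma summable_deriv_terms (hw : Good w) (φ : ℝ) :
    Summable fun k : ℕ ↦ w k * ((k : ℝ) * φ ^ (k - 1)) := by
  refine Summable.of_norm_bounded ((hw.mul_nat (|φ| + 1) (by positivity))) (fun k ↦ ?_)
  have h1 : |φ| ^ (k - 1) ≤ (|φ| + 1) ^ k :=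
    calc |φ| ^ (k - 1) ≤ (|φ| + 1) ^ (k - 1) :=
          pow_le_pow_left₀ (abs_nonneg _) (by linarith) _
      _ ≤ (|φ| + 1) ^ k := pow_le_pow_right₀ (by linarith [abs_nonneg φ]) (Nat.sub_le k 1)
  have h2 : ‖w k * ((k : ℝ) * φ ^ (k - 1))‖ = (k : ℝ) * |w k| * |φ| ^ (k - 1) := by
    rw [Real.norm_eq_abs, abs_mul, abs_mul, abs_pow, Nat.abs_cast]; ring
  have h3 : |(k : ℝ) * w k| * (|φ| + 1) ^ k = (k : ℝ) * |w k| * (|φ| + 1) ^ k := by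
    rw [abs_mul, Nat.abs_cast]
  show ‖w k * ((k : ℝ) * φ ^ (k - 1))‖ ≤ |(k : ℝ) * w k| * (|φ| + 1) ^ k
  rw [h2, h3]
  exact mul_le_mul_of_nonneg_left h1 (by positivity)

lemma tsum_deriv_eq (hw : Good w) (φ : ℝ) :
    (∑' k : ℕ, w k * ((k : ℝ) * φ ^ (k - 1))) = S (dw w) φ := by
  rw [Summable.tsum_eq_zero_add (summable_deriv_terms hw φ)]
  have h0 : w 0 * ((0 : ℕ) * φ ^ (0 - 1)) = 0 := by norm_num
  rw [h0, zero_add]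
  refine tsum_congr fun k ↦ ?_
  show w (k + 1) * (((k : ℕ) + 1 : ℕ) * φ ^ (k + 1 - 1)) = dw w k * φ ^ k
  rw [dw, Nat.add_sub_cancel]
  push_cast
  ring

lemma hasDerivAt_S (hw : Good w) (φ : ℝ) : HasDerivAt (S w) (S (dw w) φ) φ := by
  rw [← tsum_deriv_eq hw φ]
  set R := |φ| + 1 with hR
  have hRpos : (0:ℝ) < R := by positivity
  have hball : φ ∈ Metric.ball (0:ℝ) R := by
    simp [Real.dist_eq, hR]
  refine hasDerivAt_tsum_of_isPreconnected
    (u := fun k : ℕ ↦ |(k:ℝ) * w k| * R ^ k)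
    (hw.mul_nat R hRpos) Metric.isOpen_ball (convex_ball _ _).isPreconnected
    (g := fun (k : ℕ) (y : ℝ) ↦ w k * y ^ k)
    (g' := fun (k : ℕ) (y : ℝ) ↦ w k * ((k:ℝ) * y ^ (k - 1)))
    (fun k y _ ↦ (hasDerivAt_pow k y).const_mul (w k)) (fun k y hy ↦ ?_)
    hball (hw.summable φ) hball
  have hy' : |y| < R := by simpa [Real.dist_eq] using hy
  have h1 : |y| ^ (k - 1) ≤ R ^ k :=
    calc |y| ^ (k-1) ≤ R ^ (k-1) := pow_le_pow_left₀ (abs_nonneg _) hy'.le _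
      _ ≤ R ^ k := pow_le_pow_right₀ (by rw [hR]; linarith [abs_nonneg φ]) (Nat.sub_le k 1)
  have h2 : ‖w k * ((k:ℝ) * y ^ (k-1))‖ = (k : ℝ) * |w k| * |y| ^ (k - 1) := by
    rw [Real.norm_eq_abs, abs_mul, abs_mul, abs_pow, Nat.abs_cast]; ring
  have h3 : |(k : ℝ) * w k| * R ^ k = (k : ℝ) * |w k| * R ^ k := by
    rw [abs_mul, Nat.abs_cast]
  show ‖w k * ((k:ℝ) * y ^ (k-1))‖ ≤ |(k : ℝ) * w k| * R ^ k
  rw [h2, h3]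
  exact mul_le_mul_of_nonneg_left h1 (by positivity)

lemma contDiff_S (hw : Good w) : ContDiff ℝ 1 (S w) := by
  rw [contDiff_one_iff_deriv]
  refine ⟨fun φ ↦ (hasDerivAt_S hw φ).differentiableAt, ?_⟩
  have hd : deriv (S w) = S (DFDaux.dw w) := funext fun φ ↦ (hasDerivAt_S hw φ).deriv
  rw [hd]
  exact (Differentiable.continuous fun φ ↦ (hasDerivAt_S hw.dw φ).differentiableAt)

/-- value at 0 -/
lemma S_zero (w : ℕ → ℝ) : S w 0 = w 0 := by
  rw [S, tsum_eq_single 0]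
  · norm_num
  · intro k hk
    rw [zero_pow hk, mul_zero]

/-- `x * S (dw w) x = S (k * w k) x`. -/
lemma mul_S_dw (hw : Good w) (x : ℝ) :
    x * S (dw w) x = S (fun k ↦ (k : ℝ) * w k) x := by
  rw [S, S, ← tsum_mul_left]
  rw [Summable.tsum_eq_zero_add ((hw.mul_nat).summable x)]
  simp only [Nat.cast_zero, zero_mul, zero_add]
  refine (tsum_congr fun k ↦ ?_).symm
  rw [dw]
  push_cast
  ring

section gprops
variable {g : ℕ → ℝ}

lemma gfact_pos (hgpos : ∀ k ≥ 1, 0 < g k) : ∀ k, 0 < gfact g k := by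
  intro k
  induction k with
  | zero => norm_num [gfact]
  | succ n ih => rw [gfact]; exact mul_pos ih (hgpos (n+1) (Nat.le_add_left 1 n))

lemma g_tendsto (hg0 : g 0 = 0) (hgpos : ∀ k ≥ 1, 0 < g k) {a₀ : ℝ} (ha₀ : 0 < a₀)
    {b : ℕ} (hb : 1 ≤ b) (hM : ∀ n : ℕ, a₀ < g (n + b) - g n) :
    Tendsto g atTop atTop := by
  have gnn : ∀ k, 0 ≤ g k := by
    intro k
    rcases Nat.eq_zero_or_pos k with h | h
    · simp [h, hg0]
    · exact (hgpos k h).le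
  have key : ∀ m n : ℕ, g n + m * a₀ ≤ g (n + m * b) := by
    intro m
    induction m with
    | zero => intro n; simp
    | succ m ih =>
      intro n
      have h1 := ih n
      have h2 := hM (n + m * b)
      have : n + (m + 1) * b = n + m * b + b := by ring
      rw [this]
      push_cast
      nlinarith
  rw [tendsto_atTop_atTop]
  intro C
  obtain ⟨m, hm⟩ := exists_nat_ge (C / a₀)
  refine ⟨m * b, fun k hk ↦ ?_⟩
  have h1 : g (k - m * b) + m * a₀ ≤ g ((k - m * b) + m * b) := key m (k - m * b)
  rw [Nat.sub_add_cancel hk] at h1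
  have h2 : C ≤ m * a₀ := by
    rw [div_le_iff₀ ha₀] at hm
    linarith
  linarith [gnn (k - m * b)]

/-- The coefficients `1/gfact` are Good. -/
lemma good_inv_gfact (hg0 : g 0 = 0) (hgpos : ∀ k ≥ 1, 0 < g k) {a₀ : ℝ} (ha₀ : 0 < a₀)
    {b : ℕ} (hb : 1 ≤ b) (hM : ∀ n : ℕ, a₀ < g (n + b) - g n) :
    Good fun k ↦ (gfact g k)⁻¹ := by
  intro R hR
  have hgf := gfact_pos hgpos
  refine summable_of_ratio_norm_eventually_le (r := 1/2) (by norm_num) ?_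
  have htend := (g_tendsto hg0 hgpos ha₀ hb hM).eventually_ge_atTop (2 * R)
  rw [eventually_atTop] at htend ⊢
  obtain ⟨N, hN⟩ := htend
  refine ⟨N, fun k hk ↦ ?_⟩
  have hgk : 2 * R ≤ g (k + 1) := hN (k + 1) (by omega)
  have hp1 : 0 < (gfact g k)⁻¹ := inv_pos.2 (hgf k)
  have hp2 : 0 < (gfact g (k+1))⁻¹ := inv_pos.2 (hgf (k+1))
  have hgk1 : 0 < g (k + 1) := hgpos (k+1) (by omega)
  have e1 : |(gfact g (k+1))⁻¹| * R ^ (k+1) = (|(gfact g k)⁻¹| * R ^ k) * (R / g (k+1)) := by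
    rw [abs_of_pos hp1, abs_of_pos hp2]
    show (gfact g k * g (k+1))⁻¹ * R ^ (k+1) = _
    rw [pow_succ]
    field_simp
  show ‖|(gfact g (k+1))⁻¹| * R ^ (k+1)‖ ≤ 1/2 * ‖|(gfact g k)⁻¹| * R ^ k‖
  rw [Real.norm_eq_abs, Real.norm_eq_abs, abs_of_nonneg (by positivity : (0:ℝ) ≤ |(gfact g (k+1))⁻¹| * R ^ (k+1)), abs_of_nonneg (by positivity : (0:ℝ) ≤ |(gfact g k)⁻¹| * R ^ k), e1]
  have hhalf : R / g (k+1) ≤ 1/2 := by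
    rw [div_le_div_iff₀ hgk1 (by norm_num)]
    linarith
  have hnn : 0 ≤ |(gfact g k)⁻¹| * R ^ k := by positivity
  calc |(gfact g k)⁻¹| * R ^ k * (R / g (k+1)) ≤ |(gfact g k)⁻¹| * R ^ k * (1/2) :=
        mul_le_mul_of_nonneg_left hhalf hnn
    _ = 1/2 * (|(gfact g k)⁻¹| * R ^ k) := by ring


end gprops

lemma summable_kpow (hw : Good w) (φ : ℝ) :
    Summable fun k : ℕ ↦ (k : ℝ) * (w k * φ ^ k) :=
  ((hw.mul_nat).summable φ).congr fun k ↦ by ring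

lemma summable_k2pow (hw : Good w) (φ : ℝ) :
    Summable fun k : ℕ ↦ (k : ℝ) * ((k : ℝ) * (w k * φ ^ k)) :=
  ((hw.mul_nat.mul_nat).summable φ).congr fun k ↦ by ring

lemma S_nonneg (hw : Good w) (hpos : ∀ k, 0 ≤ w k) {x : ℝ} (hx : 0 ≤ x) : 0 ≤ S w x :=
  tsum_nonneg fun k ↦ mul_nonneg (hpos k) (pow_nonneg hx k)

lemma S_pos (hw : Good w) (hpos : ∀ k, 0 < w k) {x : ℝ} (hx : 0 ≤ x) : 0 < S w x := by
  refine Summable.tsum_pos (hw.summable x) (fun k ↦ mul_nonneg (hpos k).le (pow_nonneg hx k)) 0 ?_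
  simpa using hpos 0

/-- Strict Cauchy–Schwarz / variance positivity. -/
lemma variance_pos (hw : Good w) (hpos : ∀ k, 0 < w k) {φ : ℝ} (hφ : 0 < φ) :
    S (fun (k : ℕ) ↦ (k : ℝ) * w k) φ ^ 2 <
      S (fun (k : ℕ) ↦ (k : ℝ) * ((k : ℝ) * w k)) φ * S w φ := by
  set a : ℕ → ℝ := fun k ↦ w k * φ ^ k with ha
  have hapos : ∀ k, 0 < a k := fun k ↦ mul_pos (hpos k) (pow_pos hφ k)
  have sa : Summable a := hw.summable φ
  have sb : Summable fun (k : ℕ) ↦ (k : ℝ) * a k := summable_kpow hw φ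
  have sc : Summable fun (k : ℕ) ↦ (k : ℝ) * ((k : ℝ) * a k) := summable_k2pow hw φ
  set A := S w φ with hA
  set B := S (fun (k : ℕ) ↦ (k : ℝ) * w k) φ with hB
  set C := S (fun (k : ℕ) ↦ (k : ℝ) * ((k : ℝ) * w k)) φ with hC
  have hAe : A = ∑' k, a k := rfl
  have hBe : B = ∑' (k : ℕ), (k : ℝ) * a k := by
    rw [hB, S]; exact tsum_congr fun k ↦ by rw [ha]; ring
  have hCe : C = ∑' (k : ℕ), (k : ℝ) * ((k : ℝ) * a k) := by
    rw [hC, S]; exact tsum_congr fun k ↦ by rw [ha]; ring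
  have hApos : 0 < A := S_pos hw hpos hφ.le
  have hBpos : 0 < B := by
    rw [hBe]
    refine Summable.tsum_pos sb (fun k ↦ mul_nonneg (Nat.cast_nonneg k) (hapos k).le) 1 ?_
    simpa using hapos 1
  -- expand ∑ ((k A - B)^2 a k)
  have expand : ∀ k : ℕ, ((k : ℝ) * A - B) ^ 2 * a k
      = A ^ 2 * ((k : ℝ) * ((k : ℝ) * a k)) - (2 * A * B) * ((k : ℝ) * a k) + B ^ 2 * a k :=
    fun k ↦ by ring
  have s1 : Summable fun (k : ℕ) ↦ A ^ 2 * ((k : ℝ) * ((k : ℝ) * a k)) := sc.mul_left _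
  have s2 : Summable fun (k : ℕ) ↦ (2 * A * B) * ((k : ℝ) * a k) := sb.mul_left _
  have s3 : Summable fun (k : ℕ) ↦ B ^ 2 * a k := sa.mul_left _
  have sT : Summable fun (k : ℕ) ↦ ((k : ℝ) * A - B) ^ 2 * a k := by
    refine ((s1.sub s2).add s3).congr fun k ↦ ?_
    rw [expand k]
  have hT : (∑' (k : ℕ), ((k : ℝ) * A - B) ^ 2 * a k)
      = A ^ 2 * C - (2 * A * B) * B + B ^ 2 * A := by
    calc (∑' (k : ℕ), ((k : ℝ) * A - B) ^ 2 * a k)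
        = ∑' (k : ℕ), (A ^ 2 * ((k : ℝ) * ((k : ℝ) * a k)) - (2 * A * B) * ((k : ℝ) * a k)
            + B ^ 2 * a k) := tsum_congr expand
      _ = (∑' (k : ℕ), (A ^ 2 * ((k : ℝ) * ((k : ℝ) * a k)) - (2 * A * B) * ((k : ℝ) * a k)))
            + ∑' (k : ℕ), B ^ 2 * a k := Summable.tsum_add (s1.sub s2) s3
      _ = ((∑' (k : ℕ), A ^ 2 * ((k : ℝ) * ((k : ℝ) * a k))) - ∑' (k : ℕ), (2 * A * B) * ((k : ℝ) * a k))
            + ∑' (k : ℕ), B ^ 2 * a k := by rw [Summable.tsum_sub s1 s2]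
      _ = A ^ 2 * C - (2 * A * B) * B + B ^ 2 * A := by
          rw [tsum_mul_left, tsum_mul_left, tsum_mul_left, hCe, hBe, hAe]
  have hTlb : B ^ 2 * a 0 ≤ ∑' (k : ℕ), ((k : ℝ) * A - B) ^ 2 * a k := by
    have h0 : ((0 : ℕ) : ℝ) * A - B = -B := by norm_num
    have := Summable.le_tsum sT 0 (fun (j : ℕ) _ ↦ mul_nonneg (sq_nonneg _) (hapos j).le)
    calc B ^ 2 * a 0 = (((0 : ℕ) : ℝ) * A - B) ^ 2 * a 0 := by rw [h0]; ring
      _ ≤ _ := this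
  have hTpos : 0 < A ^ 2 * C - (2 * A * B) * B + B ^ 2 * A := by
    rw [← hT]
    exact lt_of_lt_of_le (mul_pos (pow_pos hBpos 2) (hapos 0)) hTlb
  nlinarith [hApos, hTpos]

set_option maxHeartbeats 1000000 in
/-- ρ is unbounded on [0,∞). -/
lemma rho_large {g : ℕ → ℝ} (hg0 : g 0 = 0) (hgpos : ∀ k ≥ 1, 0 < g k)
    (hc : Good fun k ↦ (gfact g k)⁻¹) (y : ℝ) :
    ∃ φ : ℝ, 0 ≤ φ ∧
      y ≤ (∑' k : ℕ, ((k : ℝ) * (gfact g k)⁻¹) * φ ^ k) / (∑' k : ℕ, (gfact g k)⁻¹ * φ ^ k) := by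
  have gnn : ∀ k, 0 ≤ g k := by
    intro k
    rcases Nat.eq_zero_or_pos k with h | h
    · simp [h, hg0]
    · exact (hgpos k h).le
  have hgf := gfact_pos hgpos
  obtain ⟨m, hm⟩ := exists_nat_ge (2 * y)
  set φ : ℝ := 1 + ((m : ℝ) + 1) * ∑ i ∈ Finset.range (m + 2), g i with hφdef
  have hsum_nn : 0 ≤ ∑ i ∈ Finset.range (m + 2), g i := Finset.sum_nonneg fun i _ ↦ gnn i
  have hφpos : 0 < φ := by rw [hφdef]; positivity
  have hkey : ∀ i ∈ Finset.range (m + 2), ((m : ℝ) + 1) * g i + 1 ≤ φ := by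
    intro i hi
    have h1 : g i ≤ ∑ j ∈ Finset.range (m + 2), g j := Finset.single_le_sum (fun j _ ↦ gnn j) hi
    have h2 : ((m : ℝ) + 1) * g i ≤ ((m : ℝ) + 1) * ∑ j ∈ Finset.range (m + 2), g j :=
      mul_le_mul_of_nonneg_left h1 (by positivity)
    rw [hφdef]; linarith
  have hφge : ∀ i ∈ Finset.range (m + 2), g i ≤ φ := by
    intro i hi
    have h := hkey i hi
    nlinarith [gnn i]
  set a : ℕ → ℝ := fun k ↦ (gfact g k)⁻¹ * φ ^ k with ha
  have hapos : ∀ k, 0 < a k := fun k ↦ mul_pos (inv_pos.2 (hgf k)) (pow_pos hφpos k)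
  have hstep : ∀ j : ℕ, j + 1 < m + 2 → a j * (φ / g (j + 1)) = a (j + 1) := by
    intro j _
    have hgj : 0 < g (j + 1) := hgpos (j + 1) (by omega)
    show (gfact g j)⁻¹ * φ ^ j * (φ / g (j+1)) = (gfact g j * g (j + 1))⁻¹ * φ ^ (j + 1)
    rw [mul_inv, pow_succ]
    field_simp
  have hstep_le : ∀ j : ℕ, j + 1 < m + 2 → a j ≤ a (j + 1) := by
    intro j hj
    rw [← hstep j hj]
    have hgj : 0 < g (j + 1) := hgpos (j + 1) (by omega)
    have h1 : (1 : ℝ) ≤ φ / g (j + 1) := by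
      rw [le_div_iff₀ hgj, one_mul]
      exact hφge (j + 1) (by simpa using hj)
    nlinarith [hapos j]
  have chain : ∀ k, k ≤ m → ∀ j, j ≤ k → a j ≤ a k := by
    intro k
    induction k with
    | zero => intro _ j hj; obtain rfl : j = 0 := Nat.le_zero.mp hj; exact le_rfl
    | succ k ih =>
      intro hk j hj
      rcases Nat.lt_succ_iff_lt_or_eq.mp (Nat.lt_succ_of_le hj) with h | h
      · exact le_trans (ih (by omega) j (by omega)) (hstep_le k (by omega))
      · exact le_of_eq (by rw [h])
  have hlast : ((m : ℝ) + 1) * a m ≤ a (m + 1) := by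
    rw [← hstep m (by omega)]
    have hgm : 0 < g (m + 1) := hgpos (m + 1) (by omega)
    have h1 : ((m : ℝ) + 1) ≤ φ / g (m + 1) := by
      rw [le_div_iff₀ hgm]
      have := hkey (m + 1) (by simp)
      linarith
    nlinarith [hapos m]
  have sa : Summable a := hc.summable φ
  have sa' : Summable fun k ↦ a (k + (m + 1)) := (summable_nat_add_iff (m + 1)).2 sa
  have sN : Summable fun k : ℕ ↦ (k : ℝ) * a k := summable_kpow hc φ
  have sN' : Summable fun k ↦ ((k + (m + 1) : ℕ) : ℝ) * a (k + (m + 1)) :=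
    (summable_nat_add_iff (m + 1)).2 sN
  set H := ∑ k ∈ Finset.range (m + 1), a k with hH
  set T := ∑' k : ℕ, a (k + (m + 1)) with hT
  have hTpos : 0 < T := by
    rw [hT]
    refine Summable.tsum_pos sa' (fun k ↦ (hapos _).le) 0 (hapos _)
  have hHle : H ≤ a (m + 1) := by
    have h1 : H ≤ ∑ k ∈ Finset.range (m + 1), a m := by
      refine Finset.sum_le_sum fun k hk ↦ ?_
      exact chain m le_rfl k (by have := Finset.mem_range.mp hk; omega)
    have h2 : ∑ k ∈ Finset.range (m + 1), a m = ((m : ℝ) + 1) * a m := by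
      rw [Finset.sum_const, Finset.card_range]
      push_cast
      ring
    rw [h2] at h1
    linarith
  have hamT : a (m + 1) ≤ T := by
    have := Summable.le_tsum sa' 0 (fun j _ ↦ (hapos _).le)
    simpa using this
  have hZ : (∑' k, a k) = H + T := by
    rw [hH, hT]
    exact (Summable.sum_add_tsum_nat_add (m + 1) sa).symm
  have hNsplit : (∑' k : ℕ, (k : ℝ) * a k)
      = (∑ k ∈ Finset.range (m + 1), (k : ℝ) * a k)
        + ∑' k : ℕ, ((k + (m + 1) : ℕ) : ℝ) * a (k + (m + 1)) := by
    exact (Summable.sum_add_tsum_nat_add (m + 1) sN).symm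
  have hNge : ((m : ℝ) + 1) * T ≤ ∑' k : ℕ, (k : ℝ) * a k := by
    rw [hNsplit]
    have h1 : 0 ≤ ∑ k ∈ Finset.range (m + 1), (k : ℝ) * a k :=
      Finset.sum_nonneg fun k _ ↦ mul_nonneg (Nat.cast_nonneg k) (hapos k).le
    have h2 : ((m : ℝ) + 1) * T ≤ ∑' k : ℕ, ((k + (m + 1) : ℕ) : ℝ) * a (k + (m + 1)) := by
      rw [hT, ← tsum_mul_left]
      refine Summable.tsum_le_tsum (fun k ↦ ?_) (sa'.mul_left _) sN'
      have : ((m : ℝ) + 1) ≤ ((k + (m + 1) : ℕ) : ℝ) := by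
        push_cast
        linarith [Nat.cast_nonneg (α := ℝ) k]
      exact mul_le_mul_of_nonneg_right this (hapos _).le
    linarith
  refine ⟨φ, hφpos.le, ?_⟩
  have hZpos : 0 < ∑' k : ℕ, (gfact g k)⁻¹ * φ ^ k := by
    have : (∑' k : ℕ, (gfact g k)⁻¹ * φ ^ k) = ∑' k, a k := rfl
    rw [this, hZ]
    have hHnn : 0 ≤ H := Finset.sum_nonneg fun k _ ↦ (hapos k).le
    linarith
  rw [le_div_iff₀ hZpos]
  have e1 : (∑' k : ℕ, ((k : ℝ) * (gfact g k)⁻¹) * φ ^ k) = ∑' k : ℕ, (k : ℝ) * a k :=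
    tsum_congr fun k ↦ by rw [ha]; ring
  have e2 : (∑' k : ℕ, (gfact g k)⁻¹ * φ ^ k) = H + T := hZ
  rw [e1, e2]
  have hy : y ≤ (m : ℝ) / 2 := by linarith
  have hHT : H ≤ T := le_trans hHle hamT
  have hstep1 : y * (H + T) ≤ ((m : ℝ) / 2) * (H + T) := by
    have : 0 ≤ H + T := by linarith [hTpos, (Finset.sum_nonneg fun k (_ : k ∈ Finset.range (m+1)) ↦ (hapos k).le : (0:ℝ) ≤ H)]
    nlinarith
  have hstep2 : ((m : ℝ) / 2) * (H + T) ≤ ((m : ℝ) + 1) * T := by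
    nlinarith [hTpos.le, Nat.cast_nonneg (α := ℝ) m]
  linarith

end DFDaux

open DFDaux Filter Topology in
/-- Under conditions (LG) and (M), the map
`φ ↦ ρ(φ) = E_{μ̄_φ}[ξ(0)]` is a diffeomorphism from `[0, ∞)` onto itself:
it maps `[0,∞)` bijectively onto `[0,∞)`, is `C¹` there, and has a `C¹` inverse. -/
theorem density_fugacity_diffeomorphism
    (g : ℕ → ℝ) (hg0 : g 0 = 0) (hgpos : ∀ k ≥ 1, 0 < g k)
    (a₁ : ℝ) (ha₁ : 0 < a₁) (hLG : ∀ n : ℕ, |g (n + 1) - g n| ≤ a₁)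
    (a₀ : ℝ) (ha₀ : 0 < a₀) (b : ℕ) (hb : 1 ≤ b)
    (hM : ∀ n : ℕ, a₀ < g (n + b) - g n) :
    Set.BijOn (rhoFun g) (Ici (0 : ℝ)) (Ici (0 : ℝ)) ∧
    StrictMonoOn (rhoFun g) (Ici (0 : ℝ)) ∧
    ContDiffOn ℝ 1 (rhoFun g) (Ici (0 : ℝ)) ∧
    ∃ Φ : ℝ → ℝ, Set.InvOn Φ (rhoFun g) (Ici (0 : ℝ)) (Ici (0 : ℝ)) ∧
      ContDiffOn ℝ 1 Φ (Ici (0 : ℝ)) := by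
  have hgf := gfact_pos hgpos
  set c : ℕ → ℝ := fun k ↦ (gfact g k)⁻¹ with hcdef
  have hc : Good c := good_inv_gfact hg0 hgpos ha₀ hb hM
  set c1 : ℕ → ℝ := fun (k : ℕ) ↦ (k : ℝ) * c k with hc1def
  have hc1 : Good c1 := hc.mul_nat
  have cpos : ∀ k, 0 < c k := fun k ↦ inv_pos.2 (hgf k)
  have rhoEq : rhoFun g = fun φ ↦ S c1 φ / S c φ := by
    funext φ
    rw [rhoFun, Zfun, S, S]
    congr 1
    · exact tsum_congr fun k ↦ by rw [hc1def, hcdef, div_eq_mul_inv]; ring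
    · exact tsum_congr fun k ↦ by rw [hcdef, div_eq_mul_inv]; ring
  have Zpos : ∀ x : ℝ, 0 ≤ x → 0 < S c x := fun x hx ↦ S_pos hc cpos hx
  have Bnn : ∀ x : ℝ, 0 ≤ x → 0 ≤ S c1 x := fun x hx ↦
    S_nonneg hc1 (fun k ↦ mul_nonneg (Nat.cast_nonneg k) (cpos k).le) hx
  set D : ℝ → ℝ := fun x ↦ S (dw c1) x * S c x - S c1 x * S (dw c) x with hDdef
  have hderiv : ∀ x : ℝ, S c x ≠ 0 → HasDerivAt (rhoFun g) (D x / (S c x) ^ 2) x := by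
    intro x hx
    rw [rhoEq]
    exact (hasDerivAt_S hc1 x).div (hasDerivAt_S hc x) hx
  have contS : ∀ (w : ℕ → ℝ), Good w → Continuous (S w) := fun w hw ↦ (contDiff_S hw).continuous
  have Dcont : Continuous D := by
    rw [hDdef]
    exact (((contS _ hc1.dw).mul (contS _ hc)).sub ((contS _ hc1).mul (contS _ hc.dw)))
  have hD0 : 0 < D 0 := by
    rw [hDdef]
    simp only [S_zero]
    have h1 : dw c1 0 = c 1 := by rw [dw, hc1def]; norm_num
    have h2 : c1 0 = 0 := by rw [hc1def]; norm_num
    have h3 : c 0 = 1 := by rw [hcdef]; simp [gfact]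
    rw [h1, h2, h3]
    simpa using cpos 1
  have hDpos : ∀ x : ℝ, 0 < x → 0 < D x := by
    intro x hx
    have hvar := variance_pos hc cpos hx
    have e1 : x * S (dw c1) x = S (fun (k : ℕ) ↦ (k : ℝ) * c1 k) x := mul_S_dw hc1 x
    have e2 : x * S (dw c) x = S c1 x := mul_S_dw hc x
    have hxD : 0 < x * D x := by
      have he : x * D x = S (fun (k : ℕ) ↦ (k : ℝ) * c1 k) x * S c x - S c1 x ^ 2 := by
        rw [hDdef]
        linear_combination S c x * e1 - S c1 x * e2
      rw [he]
      linarith [hvar]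
    rcases mul_pos_iff.mp hxD with ⟨_, h⟩ | ⟨h, _⟩
    · exact h
    · linarith
  -- choose an open interval I ⊇ [0,∞) on which D > 0 and Z > 0
  have hopen : IsOpen {x : ℝ | 0 < D x ∧ 0 < S c x} :=
    (isOpen_lt continuous_const Dcont).inter (isOpen_lt continuous_const (contS c hc))
  obtain ⟨ε, hε, hball⟩ := Metric.isOpen_iff.mp hopen 0 ⟨hD0, Zpos 0 le_rfl⟩
  set I : Set ℝ := Ioi (-(ε / 2)) with hIdef
  have hIci : Ici (0 : ℝ) ⊆ I := fun x hx ↦ by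
    simp only [hIdef, mem_Ioi]
    have : (0:ℝ) ≤ x := hx
    linarith
  have hIopen : IsOpen I := isOpen_Ioi
  have hIprop : ∀ x ∈ I, 0 < D x ∧ 0 < S c x := by
    intro x hx
    rcases le_or_gt x 0 with h | h
    · refine hball ?_
      simp only [Metric.mem_ball, Real.dist_eq, sub_zero]
      have hx' : -(ε / 2) < x := hx
      have : |x| ≤ ε / 2 := abs_le.mpr ⟨by linarith, by linarith⟩
      linarith
    · exact ⟨hDpos x h, Zpos x h.le⟩
  have hρderiv : ∀ x ∈ I, HasDerivAt (rhoFun g) (D x / (S c x) ^ 2) x := fun x hx ↦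
    hderiv x (ne_of_gt (hIprop x hx).2)
  have hρcontI : ContinuousOn (rhoFun g) I := fun x hx ↦
    (hρderiv x hx).continuousAt.continuousWithinAt
  have MonoI : StrictMonoOn (rhoFun g) I := by
    refine strictMonoOn_of_deriv_pos (convex_Ioi _) hρcontI ?_
    intro x hx
    rw [interior_Ioi] at hx
    rw [(hρderiv x hx).deriv]
    obtain ⟨h1, h2⟩ := hIprop x hx
    positivity
  have MonoIci : StrictMonoOn (rhoFun g) (Ici (0:ℝ)) := MonoI.mono hIci
  have hContDiffRho : ContDiffOn ℝ 1 (rhoFun g) (Ici (0:ℝ)) := by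
    rw [rhoEq]
    exact ((contDiff_S hc1).contDiffOn).div ((contDiff_S hc).contDiffOn)
      (fun x hx ↦ ne_of_gt (Zpos x hx))
  have rho0 : rhoFun g 0 = 0 := by
    rw [rhoEq]
    simp only [S_zero]
    have h2 : c1 0 = 0 := by rw [hc1def]; norm_num
    rw [h2, zero_div]
  have hMapsTo : MapsTo (rhoFun g) (Ici (0:ℝ)) (Ici (0:ℝ)) := by
    intro x hx
    have hx' : (0:ℝ) ≤ x := hx
    rw [mem_Ici, rhoEq]
    exact div_nonneg (Bnn x hx') (Zpos x hx').le
  have hSurjOn : SurjOn (rhoFun g) (Ici (0:ℝ)) (Ici (0:ℝ)) := by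
    intro y hy
    have hy' : (0:ℝ) ≤ y := hy
    obtain ⟨φ₁, hφ₁, hyle⟩ := rho_large hg0 hgpos hc y
    have hyle' : y ≤ rhoFun g φ₁ := by
      rw [rhoEq]
      exact hyle
    have hmem : y ∈ Icc (rhoFun g 0) (rhoFun g φ₁) := by
      rw [rho0]
      exact ⟨hy', hyle'⟩
    have hsub : Icc (0:ℝ) φ₁ ⊆ Ici 0 := fun t ht ↦ ht.1
    have := intermediate_value_Icc hφ₁ (hρcontI.mono (fun t ht ↦ hIci (hsub ht)))
    obtain ⟨x, hx, hρx⟩ := this hmem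
    exact ⟨x, hx.1, hρx⟩
  have hBij : BijOn (rhoFun g) (Ici (0:ℝ)) (Ici (0:ℝ)) :=
    ⟨hMapsTo, MonoIci.injOn, hSurjOn⟩
  set Φ : ℝ → ℝ := Function.invFunOn (rhoFun g) (Ici 0) with hΦdef
  have hinv : InvOn Φ (rhoFun g) (Ici (0:ℝ)) (Ici (0:ℝ)) := hBij.invOn_invFunOn
  refine ⟨hBij, MonoIci, hContDiffRho, Φ, hinv, ?_⟩
  -- C¹ smoothness of the inverse
  intro y₀ hy₀
  set x₀ : ℝ := Φ y₀ with hx₀def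
  have hx₀ : x₀ ∈ Ici (0:ℝ) := hBij.surjOn.mapsTo_invFunOn hy₀
  have hρx₀ : rhoFun g x₀ = y₀ := hinv.2 hy₀
  set d : ℝ := D x₀ / (S c x₀) ^ 2 with hddef
  have hdpos : 0 < d := by
    obtain ⟨h1, h2⟩ := hIprop x₀ (hIci hx₀)
    rw [hddef]; positivity
  have hd : HasDerivAt (rhoFun g) d x₀ := hρderiv x₀ (hIci hx₀)
  have hcdρ : ContDiffAt ℝ 1 (rhoFun g) x₀ := by
    rw [rhoEq]
    exact ((contDiff_S hc1).contDiffAt).div ((contDiff_S hc).contDiffAt)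
      (ne_of_gt (Zpos x₀ hx₀))
  set e : ℝ ≃L[ℝ] ℝ := ContinuousLinearEquiv.unitsEquivAut ℝ (Units.mk0 d hdpos.ne') with hedef
  have hfd : HasFDerivAt (rhoFun g) (e : ℝ →L[ℝ] ℝ) x₀ := by
    have h1 : (e : ℝ →L[ℝ] ℝ) = ContinuousLinearMap.smulRight (1 : ℝ →L[ℝ] ℝ) d := rfl
    rw [h1]
    exact hd.hasFDerivAt
  have hsf : HasStrictFDerivAt (rhoFun g) (e : ℝ →L[ℝ] ℝ) x₀ :=
    hcdρ.hasStrictFDerivAt' hfd one_ne_zero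
  set lg : ℝ → ℝ := hsf.localInverse (rhoFun g) e x₀ with hlgdef
  have hlgSmooth : ContDiffAt ℝ 1 lg y₀ := by
    have h := hcdρ.to_localInverse (f' := e) hfd one_ne_zero
    rw [hρx₀] at h
    exact h
  have hlgx₀ : lg y₀ = x₀ := by
    have h := hsf.localInverse_apply_image
    rwa [hρx₀] at h
  have E1 : ∀ᶠ y in 𝓝 y₀, rhoFun g (lg y) = y := by
    have h := hsf.eventually_right_inverse
    rwa [hρx₀] at h
  have hlgcont : ContinuousAt lg y₀ := by
    have h := hsf.localInverse_continuousAt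
    rwa [hρx₀] at h
  have E3 : ∀ᶠ y in 𝓝 y₀, lg y ∈ I := by
    refine hlgcont.eventually_mem ?_
    rw [hlgx₀]
    exact hIopen.mem_nhds (hIci hx₀)
  have EE : Φ =ᶠ[𝓝[Ici (0:ℝ)] y₀] lg := by
    filter_upwards [E1.filter_mono nhdsWithin_le_nhds, E3.filter_mono nhdsWithin_le_nhds,
      self_mem_nhdsWithin] with y h1 h3 hyIci
    have hΦy : Φ y ∈ Ici (0:ℝ) := hBij.surjOn.mapsTo_invFunOn hyIci
    have hρΦy : rhoFun g (Φ y) = y := hinv.2 hyIci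
    exact MonoI.injOn (hIci hΦy) h3 (by rw [hρΦy, h1])
  exact (hlgSmooth.contDiffWithinAt).congr_of_eventuallyEq EE hlgx₀.symm
end

section
/- Suppose 0 < a⁻¹ ≤ g(k)/k ≤ a for all k ≥ 1. Let ν_{Λ_l,j} be the canonical measure on configurations in Λ_l with j particles and at least one particle at the origin, and let f'(η) = f(η + 𝔡₀) where 𝔡₀ is the configuration with one particle at 0. Then Var_{ν_{Λ_l,j}}(f) ≤ a² Var_{μ_{Λ_l,j-1}}(f'), where μ_{Λ_l,j-1} is the canonical zero-range measure with j-1 particles in Λ_l. -/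
variable {Λ : Type*} [Fintype Λ] [DecidableEq Λ]

/-- Expectation of `f` with respect to the (unnormalized) weight `w`. -/
noncomputable def Ew (w : (Λ → ℕ) → ℝ) (f : (Λ → ℕ) → ℝ) : ℝ :=
  (∑' η : Λ → ℕ, w η * f η) / ∑' η : Λ → ℕ, w η

/-- Variance of `f` with respect to the (unnormalized) weight `w`. -/
noncomputable def Varw (w : (Λ → ℕ) → ℝ) (f : (Λ → ℕ) → ℝ) : ℝ :=
  Ew w (fun η => (f η - Ew w f) ^ 2)

/-- Weight of the canonical zero-range measure `μ_{Λ,k}` with `k` particles in `Λ`: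
proportional to `∏_x φ^{η(x)}/g(η(x))!` restricted to `Σ_x η(x) = k`
(the factor `φ^k` is constant and cancels). -/
noncomputable def muCanW (g : ℕ → ℝ) (k : ℕ) : (Λ → ℕ) → ℝ := fun η =>
  if ∑ x, η x = k then ∏ x, (gfact g (η x))⁻¹ else 0

/-- Weight of the size-biased canonical measure `ν_{Λ,j}`, supported on
configurations with `η(o) ≥ 1` and `j` particles, with density proportional
to `η(o)` times the zero-range weight. -/
noncomputable def nuCanW (g : ℕ → ℝ) (o : Λ) (j : ℕ) : (Λ → ℕ) → ℝ := fun η =>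
  if 1 ≤ η o ∧ ∑ x, η x = j then (η o : ℝ) * ∏ x, (gfact g (η x))⁻¹ else 0
section Aux

variable {α : Type*}

lemma gfact_pos {g : ℕ → ℝ} (hgpos : ∀ k : ℕ, 1 ≤ k → 0 < g k) : ∀ n, 0 < gfact g n
  | 0 => one_pos
  | n + 1 => mul_pos (gfact_pos hgpos n) (hgpos (n + 1) (Nat.succ_le_succ (Nat.zero_le n)))

/-- The finset of configurations with all coordinates at most `k`. -/
noncomputable def sFin (k : ℕ) : Finset (Λ → ℕ) :=
  Fintype.piFinset fun _ : Λ => Finset.range (k + 1)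

lemma mem_sFin {k : ℕ} {η : Λ → ℕ} (h : ∑ x, η x = k) : η ∈ sFin k := by
  refine Fintype.mem_piFinset.2 fun x => Finset.mem_range.2 ?_
  have : η x ≤ ∑ y, η y := Finset.single_le_sum (fun y _ => Nat.zero_le _) (Finset.mem_univ x)
  omega

lemma mu_off {g : ℕ → ℝ} {k : ℕ} : ∀ η ∉ (sFin k : Finset (Λ → ℕ)), muCanW g k η = 0 := by
  intro η hη
  by_cases h : ∑ x, η x = k
  · exact absurd (mem_sFin h) hη
  · simp [muCanW, h]

lemma nu_off {g : ℕ → ℝ} {o : Λ} {j : ℕ} :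
    ∀ η ∉ (sFin j : Finset (Λ → ℕ)), nuCanW g o j η = 0 := by
  intro η hη
  by_cases h : ∑ x, η x = j
  · exact absurd (mem_sFin h) hη
  · simp [nuCanW, h]

lemma Ew_eq_sum (w G : (Λ → ℕ) → ℝ) (s : Finset (Λ → ℕ)) (h0 : ∀ b ∉ s, w b = 0) :
    Ew w G = (∑ b ∈ s, w b * G b) / ∑ b ∈ s, w b := by
  unfold Ew
  rw [tsum_eq_sum h0, tsum_eq_sum (s := s) (fun b hb => by rw [h0 b hb, zero_mul])]

/-- The variance is at most the mean square deviation from any constant. -/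
lemma varw_le_sum (w F : (Λ → ℕ) → ℝ) (s : Finset (Λ → ℕ)) (h0 : ∀ b ∉ s, w b = 0)
    (hpos : 0 < ∑ b ∈ s, w b) (c : ℝ) :
    Varw w F ≤ (∑ b ∈ s, w b * (F b - c) ^ 2) / ∑ b ∈ s, w b := by
  have hE : ∀ G, Ew w G = (∑ b ∈ s, w b * G b) / ∑ b ∈ s, w b := fun G =>
    Ew_eq_sum w G s h0
  unfold Varw
  rw [hE]
  set S := ∑ b ∈ s, w b with hS
  set m := Ew w F with hm
  rw [div_le_div_iff_of_pos_right hpos]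
  have hMF : ∑ b ∈ s, w b * F b = m * S := by
    rw [hm, hE F]
    exact (div_mul_cancel₀ _ hpos.ne').symm
  have expand : ∀ d : ℝ, ∑ b ∈ s, w b * (F b - d) ^ 2
      = ∑ b ∈ s, w b * F b ^ 2 - 2 * d * (∑ b ∈ s, w b * F b) + d ^ 2 * S := by
    intro d
    rw [hS, Finset.mul_sum, Finset.mul_sum, ← Finset.sum_sub_distrib, ← Finset.sum_add_distrib]
    exact Finset.sum_congr rfl fun b _ => by ring
  have key : ∑ b ∈ s, w b * (F b - c) ^ 2
      = ∑ b ∈ s, w b * (F b - m) ^ 2 + (m - c) ^ 2 * S := by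
    rw [expand c, expand m, hMF]; ring
  nlinarith [mul_nonneg (sq_nonneg (m - c)) hpos.le]

lemma ratio_compare {a : ℝ} (ha : 0 < a) (w μ G : α → ℝ) (s : Finset α)
    (hμ : ∀ b, 0 ≤ μ b) (hG : ∀ b, 0 ≤ G b)
    (hlow : ∀ b, a⁻¹ * μ b ≤ w b) (hup : ∀ b, w b ≤ a * μ b)
    (hpos : 0 < ∑ b ∈ s, μ b) :
    (∑ b ∈ s, w b * G b) / (∑ b ∈ s, w b) ≤
      a ^ 2 * ((∑ b ∈ s, μ b * G b) / (∑ b ∈ s, μ b)) := by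
  have hw0 : ∀ b, 0 ≤ w b := fun b =>
    le_trans (mul_nonneg (inv_pos.2 ha).le (hμ b)) (hlow b)
  have hSw : a⁻¹ * (∑ b ∈ s, μ b) ≤ ∑ b ∈ s, w b := by
    rw [Finset.mul_sum]; exact Finset.sum_le_sum fun b _ => hlow b
  have hSwpos : 0 < ∑ b ∈ s, w b :=
    lt_of_lt_of_le (mul_pos (inv_pos.2 ha) hpos) hSw
  have hNw : ∑ b ∈ s, w b * G b ≤ a * ∑ b ∈ s, μ b * G b := by
    rw [Finset.mul_sum]
    exact Finset.sum_le_sum fun b _ => by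
      rw [← mul_assoc]; exact mul_le_mul_of_nonneg_right (hup b) (hG b)
  have hNw0 : 0 ≤ ∑ b ∈ s, w b * G b :=
    Finset.sum_nonneg fun b _ => mul_nonneg (hw0 b) (hG b)
  have hNμ0 : 0 ≤ ∑ b ∈ s, μ b * G b :=
    Finset.sum_nonneg fun b _ => mul_nonneg (hμ b) (hG b)
  rw [← mul_div_assoc, div_le_div_iff₀ hSwpos hpos]
  have h1 : ∑ b ∈ s, μ b ≤ a * ∑ b ∈ s, w b := by
    have := mul_le_mul_of_nonneg_left hSw ha.le
    rw [← mul_assoc, mul_inv_cancel₀ ha.ne', one_mul] at this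
    exact this
  have h2 : (∑ b ∈ s, w b * G b) * (∑ b ∈ s, μ b)
      ≤ (a * ∑ b ∈ s, μ b * G b) * (a * ∑ b ∈ s, w b) :=
    mul_le_mul hNw h1 (Finset.sum_nonneg fun b _ => hμ b)
      (mul_nonneg ha.le hNμ0)
  nlinarith [h2]

end Aux

section Reindex

lemma nu_psi (g : ℕ → ℝ) (o : Λ) (j : ℕ) (hj : 1 ≤ j) (η : Λ → ℕ) :
    nuCanW g o j (Function.update η o (η o + 1)) =
      ((η o + 1 : ℕ) : ℝ) * (g (η o + 1))⁻¹ * muCanW g (j - 1) η := by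
  have hsum : ∑ x, Function.update η o (η o + 1) x = (∑ x, η x) + 1 := by
    rw [Finset.sum_update_of_mem (Finset.mem_univ o), Finset.sdiff_singleton_eq_erase]
    rw [← Finset.add_sum_erase _ η (Finset.mem_univ o)]
    ring
  have hprod : ∏ x, (gfact g (Function.update η o (η o + 1) x))⁻¹ =
      (g (η o + 1))⁻¹ * ((gfact g (η o))⁻¹ * ∏ x ∈ Finset.univ.erase o, (gfact g (η x))⁻¹) := by
    have herase : ∏ x ∈ Finset.univ.erase o, (gfact g (Function.update η o (η o + 1) x))⁻¹
        = ∏ x ∈ Finset.univ.erase o, (gfact g (η x))⁻¹ :=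
      Finset.prod_congr rfl fun x hx => by
        rw [Function.update_of_ne (Finset.ne_of_mem_erase hx)]
    rw [← Finset.mul_prod_erase _ _ (Finset.mem_univ o), herase, Function.update_self]
    rw [show gfact g (η o + 1) = gfact g (η o) * g (η o + 1) from rfl, mul_inv]
    ring
  have hprodη : ∏ x, (gfact g (η x))⁻¹ =
      (gfact g (η o))⁻¹ * ∏ x ∈ Finset.univ.erase o, (gfact g (η x))⁻¹ :=
    (Finset.mul_prod_erase _ _ (Finset.mem_univ o)).symm
  unfold nuCanW muCanW
  rw [hsum]
  by_cases h : ∑ x, η x = j - 1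
  · have hc : 1 ≤ Function.update η o (η o + 1) o ∧ (∑ x, η x) + 1 = j := by
      rw [Function.update_self]; omega
    rw [if_pos hc, if_pos h, hprod, hprodη, Function.update_self]
    push_cast
    ring
  · have hc : ¬(1 ≤ Function.update η o (η o + 1) o ∧ (∑ x, η x) + 1 = j) := by
      rw [Function.update_self]; omega
    rw [if_neg hc, if_neg h, mul_zero]

lemma reindex (g : ℕ → ℝ) (o : Λ) (j : ℕ) (hj : 1 ≤ j) (F : (Λ → ℕ) → ℝ) :
    ∑' ζ : Λ → ℕ, nuCanW g o j ζ * F ζ =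
      ∑' η : Λ → ℕ, (((η o + 1 : ℕ) : ℝ) * (g (η o + 1))⁻¹ * muCanW g (j - 1) η) *
        F (Function.update η o (η o + 1)) := by
  have hinj : Function.Injective (fun η : Λ → ℕ => Function.update η o (η o + 1)) := by
    intro η η' h
    funext x
    by_cases hx : x = o
    · subst hx
      have := congrFun h x
      simpa using this
    · have := congrFun h x
      simpa [Function.update_of_ne hx] using this
  have hsupp : Function.support (fun ζ => nuCanW g o j ζ * F ζ) ⊆
      Set.range (fun η : Λ → ℕ => Function.update η o (η o + 1)) := by
    intro ζ hζ
    have hζ1 : 1 ≤ ζ o := by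
      by_contra hc
      apply hζ
      show nuCanW g o j ζ * F ζ = 0
      unfold nuCanW
      rw [if_neg (fun hcc => hc hcc.1), zero_mul]
    refine ⟨Function.update ζ o (ζ o - 1), ?_⟩
    show Function.update (Function.update ζ o (ζ o - 1)) o
        ((Function.update ζ o (ζ o - 1)) o + 1) = ζ
    rw [Function.update_self, Function.update_idem]
    have : ζ o - 1 + 1 = ζ o := by omega
    rw [this, Function.update_eq_self]
  calc ∑' ζ : Λ → ℕ, nuCanW g o j ζ * F ζ
      = ∑' η : Λ → ℕ, nuCanW g o j (Function.update η o (η o + 1)) *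
          F (Function.update η o (η o + 1)) := (hinj.tsum_eq hsupp).symm
    _ = _ := by
        exact tsum_congr fun η => by rw [nu_psi g o j hj η]

end Reindex

/-- Suppose `0 < a⁻¹ ≤ g(k)/k ≤ a` for `k ≥ 1`.  Then for the
size-biased canonical measure `ν_{Λ_l,j}` (at least one particle at the origin `o`,
`j` particles in `Λ_l`) and `f'(η) = f(η + 𝔡_o)`,
`Var_{ν_{Λ_l,j}}(f) ≤ a² Var_{μ_{Λ_l,j-1}}(f')`. -/
theorem variance_comparison_size_biased
    (g : ℕ → ℝ) (hg0 : g 0 = 0) (a : ℝ) (ha : 0 < a)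
    (hg : ∀ k : ℕ, 1 ≤ k → a⁻¹ ≤ g k / (k : ℝ) ∧ g k / (k : ℝ) ≤ a)
    (o : Λ) (j : ℕ) (hj : 1 ≤ j) (f : (Λ → ℕ) → ℝ) :
    Varw (nuCanW g o j) f ≤
      a ^ 2 * Varw (muCanW g (j - 1))
        (fun η => f (Function.update η o (η o + 1))) := by
  classical
  have hgpos : ∀ k : ℕ, 1 ≤ k → 0 < g k := by
    intro k hk
    have h1 := (hg k hk).1
    have hk0 : (0 : ℝ) < (k : ℝ) := by exact_mod_cast hk
    have hq : (0 : ℝ) < g k / k := lt_of_lt_of_le (inv_pos.2 ha) h1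
    have := mul_pos hq hk0
    rwa [div_mul_cancel₀ _ hk0.ne'] at this
  have hcoef : ∀ n : ℕ, a⁻¹ ≤ ((n + 1 : ℕ) : ℝ) * (g (n + 1))⁻¹ ∧
      ((n + 1 : ℕ) : ℝ) * (g (n + 1))⁻¹ ≤ a := by
    intro n
    obtain ⟨h1, h2⟩ := hg (n + 1) (Nat.le_add_left 1 n)
    have hgp : 0 < g (n + 1) := hgpos (n + 1) (Nat.le_add_left 1 n)
    have hm : (0 : ℝ) < ((n + 1 : ℕ) : ℝ) := by exact_mod_cast Nat.succ_pos n
    rw [le_div_iff₀ hm] at h1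
    rw [div_le_iff₀ hm] at h2
    have haa : a * a⁻¹ = 1 := mul_inv_cancel₀ ha.ne'
    constructor
    · rw [← div_eq_mul_inv, le_div_iff₀ hgp]
      nlinarith
    · rw [← div_eq_mul_inv, div_le_iff₀ hgp]
      nlinarith
  have hμ0 : ∀ η : Λ → ℕ, 0 ≤ muCanW g (j - 1) η := by
    intro η
    unfold muCanW
    split
    · exact Finset.prod_nonneg fun x _ => (inv_pos.2 (gfact_pos hgpos _)).le
    · exact le_refl 0
  have hν0 : ∀ η : Λ → ℕ, 0 ≤ nuCanW g o j η := by
    intro η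
    unfold nuCanW
    split
    · exact mul_nonneg (Nat.cast_nonneg _)
        (Finset.prod_nonneg fun x _ => (inv_pos.2 (gfact_pos hgpos _)).le)
    · exact le_refl 0
  have hlow : ∀ η : Λ → ℕ,
      a⁻¹ * muCanW g (j - 1) η ≤
        ((η o + 1 : ℕ) : ℝ) * (g (η o + 1))⁻¹ * muCanW g (j - 1) η := fun η =>
    mul_le_mul_of_nonneg_right (hcoef (η o)).1 (hμ0 η)
  have hup : ∀ η : Λ → ℕ,
      ((η o + 1 : ℕ) : ℝ) * (g (η o + 1))⁻¹ * muCanW g (j - 1) η ≤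
        a * muCanW g (j - 1) η := fun η =>
    mul_le_mul_of_nonneg_right (hcoef (η o)).2 (hμ0 η)
  -- positivity of the partition sums
  have hsum0 : ∑ x, Function.update (fun _ : Λ => 0) o (j - 1) x = j - 1 := by
    rw [Finset.sum_update_of_mem (Finset.mem_univ o)]
    simp
  have hsum1 : ∑ x, Function.update (fun _ : Λ => 0) o j x = j := by
    rw [Finset.sum_update_of_mem (Finset.mem_univ o)]
    simp
  have P0 : 0 < ∑ b ∈ sFin (Λ := Λ) (j - 1), muCanW g (j - 1) b := by
    refine Finset.sum_pos' (fun b _ => hμ0 b) ⟨_, mem_sFin hsum0, ?_⟩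
    unfold muCanW
    rw [if_pos hsum0]
    exact Finset.prod_pos fun x _ => inv_pos.2 (gfact_pos hgpos _)
  have P1 : 0 < ∑ b ∈ sFin (Λ := Λ) j, nuCanW g o j b := by
    refine Finset.sum_pos' (fun b _ => hν0 b) ⟨_, mem_sFin hsum1, ?_⟩
    unfold nuCanW
    have hc : 1 ≤ Function.update (fun _ : Λ => 0) o j o ∧
        ∑ x, Function.update (fun _ : Λ => 0) o j x = j := by
      rw [Function.update_self]; exact ⟨hj, hsum1⟩
    rw [if_pos hc]
    have : (0 : ℝ) < (Function.update (fun _ : Λ => 0) o j o : ℝ) := by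
      rw [Function.update_self]; exact_mod_cast hj
    exact mul_pos this (Finset.prod_pos fun x _ => inv_pos.2 (gfact_pos hgpos _))
  set c := Ew (muCanW g (j - 1)) (fun η => f (Function.update η o (η o + 1))) with hcdef
  have step1 : Varw (nuCanW g o j) f ≤
      (∑ b ∈ sFin (Λ := Λ) j, nuCanW g o j b * (f b - c) ^ 2) /
        ∑ b ∈ sFin (Λ := Λ) j, nuCanW g o j b :=
    varw_le_sum _ _ _ nu_off P1 c
  have num_eq : (∑ b ∈ sFin (Λ := Λ) j, nuCanW g o j b * (f b - c) ^ 2) =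
      ∑ b ∈ sFin (Λ := Λ) (j - 1),
        ((b o + 1 : ℕ) : ℝ) * (g (b o + 1))⁻¹ * muCanW g (j - 1) b *
          (f (Function.update b o (b o + 1)) - c) ^ 2 := by
    calc (∑ b ∈ sFin (Λ := Λ) j, nuCanW g o j b * (f b - c) ^ 2)
        = ∑' ζ : Λ → ℕ, nuCanW g o j ζ * (f ζ - c) ^ 2 :=
          (tsum_eq_sum fun b hb => by rw [nu_off b hb, zero_mul]).symm
      _ = ∑' η : Λ → ℕ, ((η o + 1 : ℕ) : ℝ) * (g (η o + 1))⁻¹ * muCanW g (j - 1) η *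
            (f (Function.update η o (η o + 1)) - c) ^ 2 :=
          reindex g o j hj (fun ζ => (f ζ - c) ^ 2)
      _ = _ := tsum_eq_sum fun b hb => by rw [mu_off b hb, mul_zero, zero_mul]
  have den_eq : (∑ b ∈ sFin (Λ := Λ) j, nuCanW g o j b) =
      ∑ b ∈ sFin (Λ := Λ) (j - 1),
        ((b o + 1 : ℕ) : ℝ) * (g (b o + 1))⁻¹ * muCanW g (j - 1) b := by
    calc (∑ b ∈ sFin (Λ := Λ) j, nuCanW g o j b)
        = ∑ b ∈ sFin (Λ := Λ) j, nuCanW g o j b * 1 := by simp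
      _ = ∑' ζ : Λ → ℕ, nuCanW g o j ζ * 1 :=
          (tsum_eq_sum fun b hb => by rw [nu_off b hb, zero_mul]).symm
      _ = ∑' η : Λ → ℕ, ((η o + 1 : ℕ) : ℝ) * (g (η o + 1))⁻¹ * muCanW g (j - 1) η * 1 :=
          reindex g o j hj (fun _ => 1)
      _ = ∑ b ∈ sFin (Λ := Λ) (j - 1),
            ((b o + 1 : ℕ) : ℝ) * (g (b o + 1))⁻¹ * muCanW g (j - 1) b * 1 :=
          tsum_eq_sum fun b hb => by rw [mu_off b hb, mul_zero, zero_mul]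
      _ = _ := by simp
  have step3 : (∑ b ∈ sFin (Λ := Λ) (j - 1),
        ((b o + 1 : ℕ) : ℝ) * (g (b o + 1))⁻¹ * muCanW g (j - 1) b *
          (f (Function.update b o (b o + 1)) - c) ^ 2) /
      (∑ b ∈ sFin (Λ := Λ) (j - 1),
        ((b o + 1 : ℕ) : ℝ) * (g (b o + 1))⁻¹ * muCanW g (j - 1) b) ≤
      a ^ 2 * ((∑ b ∈ sFin (Λ := Λ) (j - 1),
          muCanW g (j - 1) b * (f (Function.update b o (b o + 1)) - c) ^ 2) /
        ∑ b ∈ sFin (Λ := Λ) (j - 1), muCanW g (j - 1) b) :=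
    ratio_compare ha
      (fun η => ((η o + 1 : ℕ) : ℝ) * (g (η o + 1))⁻¹ * muCanW g (j - 1) η)
      (muCanW g (j - 1))
      (fun η => (f (Function.update η o (η o + 1)) - c) ^ 2)
      (sFin (Λ := Λ) (j - 1)) hμ0 (fun b => sq_nonneg _) hlow hup P0
  have step4 : Varw (muCanW g (j - 1)) (fun η => f (Function.update η o (η o + 1)))
      = (∑ b ∈ sFin (Λ := Λ) (j - 1),
          muCanW g (j - 1) b * (f (Function.update b o (b o + 1)) - c) ^ 2) /
        ∑ b ∈ sFin (Λ := Λ) (j - 1), muCanW g (j - 1) b := by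
    unfold Varw
    rw [← hcdef, Ew_eq_sum _ _ (sFin (Λ := Λ) (j - 1)) mu_off]
  calc Varw (nuCanW g o j) f
      ≤ (∑ b ∈ sFin (Λ := Λ) j, nuCanW g o j b * (f b - c) ^ 2) /
          ∑ b ∈ sFin (Λ := Λ) j, nuCanW g o j b := step1
    _ = (∑ b ∈ sFin (Λ := Λ) (j - 1),
          ((b o + 1 : ℕ) : ℝ) * (g (b o + 1))⁻¹ * muCanW g (j - 1) b *
            (f (Function.update b o (b o + 1)) - c) ^ 2) /
        (∑ b ∈ sFin (Λ := Λ) (j - 1),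
          ((b o + 1 : ℕ) : ℝ) * (g (b o + 1))⁻¹ * muCanW g (j - 1) b) := by
        rw [num_eq, den_eq]
    _ ≤ a ^ 2 * ((∑ b ∈ sFin (Λ := Λ) (j - 1),
          muCanW g (j - 1) b * (f (Function.update b o (b o + 1)) - c) ^ 2) /
        ∑ b ∈ sFin (Λ := Λ) (j - 1), muCanW g (j - 1) b) := step3
    _ = a ^ 2 * Varw (muCanW g (j - 1)) (fun η => f (Function.update η o (η o + 1))) := by
        rw [step4]
end

section
/- Suppose X_t and Z_t are coupled jump processes with the same skeleton chain (same sequence of visited sites) such that each holding time of Z is less than or equal to the corresponding holding time of X. Then for all 0 ≤ s ≤ t ≤ T, sup_{|t−s|≤ε} |X_t − X_s| ≤ sup_{|t−s|≤ε} |Z_t − Z_s| (modulus of continuity domination). -/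
open Filter

/-- The number of jumps up to time `t` of a jump process with jump times `T`:
`cnt T t = max {k | T k ≤ t}`. -/
noncomputable def cnt (T : ℕ → ℝ) (t : ℝ) : ℕ := sSup {k | T k ≤ t}

/-- The pure-jump path visiting the sites `site 0, site 1, …` with jump times `T`. -/
noncomputable def jumpPath (site : ℕ → ℝ) (T : ℕ → ℝ) (t : ℝ) : ℝ :=
  site (cnt T t)

lemma cnt_bddAbove {T : ℕ → ℝ} (htop : Tendsto T atTop atTop) (t : ℝ) :
    BddAbove {k | T k ≤ t} := by
  obtain ⟨N, hN⟩ := (htop.eventually (eventually_gt_atTop t)).exists_forall_of_atTop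
  exact ⟨N, fun k hk => by
    by_contra h
    exact absurd (hN k (le_of_not_ge h)) (not_lt.2 hk)⟩

lemma cnt_spec {T : ℕ → ℝ} (h0 : T 0 = 0) (htop : Tendsto T atTop atTop)
    {t : ℝ} (ht : 0 ≤ t) : T (cnt T t) ≤ t ∧ t < T (cnt T t + 1) := by
  have hne : {k | T k ≤ t}.Nonempty := ⟨0, by simpa [h0] using ht⟩
  have hbdd := cnt_bddAbove htop t
  constructor
  · exact Nat.sSup_mem hne hbdd
  · by_contra h
    have : cnt T t + 1 ≤ cnt T t := le_csSup hbdd (le_of_not_gt h)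
    omega

lemma cnt_eq {T : ℕ → ℝ} (hmono : StrictMono T) (htop : Tendsto T atTop atTop)
    {m : ℕ} {s : ℝ} (h1 : T m ≤ s) (h2 : s < T (m + 1)) : cnt T s = m := by
  apply le_antisymm
  · apply csSup_le ⟨m, h1⟩
    intro k hk
    have : T k < T (m + 1) := lt_of_le_of_lt hk h2
    have := hmono.lt_iff_lt.mp this
    omega
  · exact le_csSup (cnt_bddAbove htop s) h1

lemma telescope_dom {TX TZ : ℕ → ℝ}
    (hdom : ∀ k : ℕ, TZ (k + 1) - TZ k ≤ TX (k + 1) - TX k)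
    {m n : ℕ} (h : m ≤ n) : TZ n - TZ m ≤ TX n - TX m := by
  induction n with
  | zero => simp_all
  | succ n ih =>
    rcases Nat.lt_or_ge m (n + 1) with h' | h'
    · have := ih (Nat.lt_succ_iff.mp h')
      have := hdom n
      linarith
    · have : m = n + 1 := le_antisymm h h'
      simp [this]

/-- **modulus of continuity domination.** Suppose `X_t` and `Z_t`
are coupled jump processes with the same skeleton chain (the same sequence
`site` of visited sites), such that each holding time of `Z` is at most the
corresponding holding time of `X`.  Then for every `ε > 0`,
`sup_{|t−s|≤ε, 0≤s≤t≤T} |X_t − X_s| ≤ sup_{|t−s|≤ε, 0≤s≤t≤T} |Z_t − Z_s|`. -/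
theorem modulus_of_continuity_domination
    (site : ℕ → ℝ) (TX TZ : ℕ → ℝ)
    (hX0 : TX 0 = 0) (hZ0 : TZ 0 = 0)
    (hXmono : StrictMono TX) (hZmono : StrictMono TZ)
    (hdom : ∀ k : ℕ, TZ (k + 1) - TZ k ≤ TX (k + 1) - TX k)
    (hXtop : Tendsto TX atTop atTop) (hZtop : Tendsto TZ atTop atTop)
    (Ttot : ℝ) (hT : 0 ≤ Ttot) (ε : ℝ) (hε : 0 < ε) :
    sSup {d : ℝ | ∃ s t : ℝ, 0 ≤ s ∧ s ≤ t ∧ t ≤ Ttot ∧ t - s ≤ ε ∧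
        d = |jumpPath site TX t - jumpPath site TX s|} ≤
      sSup {d : ℝ | ∃ s t : ℝ, 0 ≤ s ∧ s ≤ t ∧ t ≤ Ttot ∧ t - s ≤ ε ∧
        d = |jumpPath site TZ t - jumpPath site TZ s|} := by
  set SZ := {d : ℝ | ∃ s t : ℝ, 0 ≤ s ∧ s ≤ t ∧ t ≤ Ttot ∧ t - s ≤ ε ∧
        d = |jumpPath site TZ t - jumpPath site TZ s|} with hSZ
  -- 0 ∈ SZ
  have h0mem : (0 : ℝ) ∈ SZ :=
    ⟨0, 0, le_refl 0, le_refl 0, hT, by linarith, by simp⟩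
  -- TZ ≤ TX pointwise
  have hTZX : ∀ n, TZ n ≤ TX n := fun n => by
    have := telescope_dom hdom (Nat.zero_le n)
    rw [hX0, hZ0] at this; linarith
  -- SZ is bounded above
  obtain ⟨N, hN⟩ := (hZtop.eventually (eventually_gt_atTop Ttot)).exists_forall_of_atTop
  have hcntle : ∀ u : ℝ, u ≤ Ttot → 0 ≤ u → cnt TZ u ≤ N := by
    intro u hu hu0
    by_contra h
    have h1 := (cnt_spec hZ0 hZtop hu0).1
    have := hN (cnt TZ u) (le_of_not_ge h)
    linarith
  set M := (Finset.range (N + 1)).sup' (by simp) (fun k => |site k|) with hM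
  have hMb : ∀ k ≤ N, |site k| ≤ M := by
    intro k hk
    exact Finset.le_sup' (fun j => |site j|) (Finset.mem_range.mpr (Nat.lt_succ_of_le hk))
  have hbddZ : BddAbove SZ := by
    refine ⟨M + M, fun d hd => ?_⟩
    obtain ⟨s, t, hs0, hst, htT, _, hd⟩ := hd
    rw [hd]
    unfold jumpPath
    calc |site (cnt TZ t) - site (cnt TZ s)| ≤ |site (cnt TZ t)| + |site (cnt TZ s)| :=
          abs_sub _ _
      _ ≤ M + M := add_le_add (hMb _ (hcntle t htT (hs0.trans hst)))
          (hMb _ (hcntle s (hst.trans htT) hs0))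
  have hZnonneg : (0 : ℝ) ≤ sSup SZ := le_csSup hbddZ h0mem
  apply Real.sSup_le _ hZnonneg
  rintro d ⟨s, t, hs0, hst, htT, hts, hd⟩
  -- show d ∈ or ≤ sSup SZ
  set m := cnt TX s with hm
  set n := cnt TX t with hn
  have ht0 : 0 ≤ t := hs0.trans hst
  obtain ⟨hms, hsm⟩ := cnt_spec hX0 hXtop hs0
  obtain ⟨hnt, htn⟩ := cnt_spec hX0 hXtop ht0
  rw [← hm] at hms hsm
  rw [← hn] at hnt htn
  have hmn : m ≤ n := le_csSup (cnt_bddAbove hXtop t) (hms.trans hst)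
  rcases eq_or_lt_of_le hmn with heq | hlt
  · -- d = 0
    have : d = 0 := by
      rw [hd]; unfold jumpPath; rw [← hm, ← hn, heq]; simp
    rw [this]; exact hZnonneg
  · -- m < n : build witnesses in SZ
    have key : TZ n - TZ (m + 1) < t - s := by
      have h1 : TZ n - TZ (m + 1) ≤ TX n - TX (m + 1) := telescope_dom hdom (by omega)
      linarith
    set s' := max (TZ m) (TZ n - ε) with hs'
    have hs'0 : 0 ≤ s' := le_max_of_le_left (by rw [← hZ0]; exact (hZmono.monotone (Nat.zero_le m)))
    have hs'lt : s' < TZ (m + 1) := by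
      apply max_lt (hZmono (by omega))
      linarith
    have hs'ge : TZ m ≤ s' := le_max_left _ _
    have hcs' : cnt TZ s' = m := cnt_eq hZmono hZtop hs'ge hs'lt
    have hct' : cnt TZ (TZ n) = n := cnt_eq hZmono hZtop (le_refl _) (hZmono (by omega))
    have hdmem : d ∈ SZ := by
      refine ⟨s', TZ n, hs'0, ?_, ?_, ?_, ?_⟩
      · exact max_le (hZmono.monotone (le_of_lt hlt)) (by linarith)
      · exact le_trans (hTZX n) (hnt.trans htT)
      · have : TZ n - ε ≤ s' := le_max_right _ _
        linarith
      · rw [hd]; unfold jumpPath; rw [hcs', hct', ← hm, ← hn]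
    exact le_csSup hbddZ hdmem
end
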